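/- For the Dykstra iteration with b ≥ ‖x_0 − p‖, p a common point: for all ε > 0 and n ∈ ℕ with n ≥ 1, if ‖x_0 − P_j(x_0)‖ ≤ ε²/(4bn) for all j ∈ {1,…,m}, then ‖x_n − x_0‖ ≤ ε. -/

import Mathlib

open scoped RealInnerProductSpace

/-!
Dykstra's increments satisfy `x_k - x_{k-1} = q_{k-m} - q_k`, and `q_k` is an outer normal of
`C_k` at `x_k`. Hence, for every `z`, the quantity
`‖z - x_n‖² + ∑_{k ≤ n} ‖x_k - x_{k-1}‖² - 2 ∑_{n-m < k ≤ n} ⟪z - x_k, q_k⟫`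
is nonincreasing in `n`, which is the main inequality. Taking `z = p` bounds every step by `b`,
and since `‖q_k‖ ≤ ‖q_{k-m}‖ + ‖x_k - x_{k-1}‖` the last `m` normals have total norm at most
`b n`. Taking `z = x_0`, each `⟪x_0 - x_k, q_k⟫` is at most `‖x_0 - P_k x_0‖ ‖q_k‖`, so
`‖x_n - x_0‖² ≤ 2 (ε² / 4bn) b n ≤ ε²`.
-/

open Finset

theorem Function.Periodic.forall_of_forall_Icc {α : Type*} {C : ℤ → α} {m : ℕ}
    (hC : Function.Periodic C m) (hm : 0 < m) {Q : α → Prop}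
    (hQ : ∀ j ∈ Icc (1 : ℤ) m, Q (C j)) (k : ℤ) : Q (C k) := by
  obtain ⟨j, ⟨hj0, hjm⟩, hCj⟩ := hC.exists_mem_Ioc (by exact_mod_cast hm) k 0
  rw [hCj]
  exact hQ j (mem_Icc.2 ⟨by omega, by simpa using hjm⟩)

theorem Finset.sum_range_sub_add_one {M : Type*} [AddCommMonoid M] (f : ℤ → M) (m : ℕ)
    (n : ℤ) :
    ∑ i ∈ range m, f (n + 1 - i) + f (n + 1 - m) = f (n + 1) + ∑ i ∈ range m, f (n - i) := by
  rw [← sum_range_succ (fun i : ℕ => f (n + 1 - i)), sum_range_succ']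
  simp [add_comm, add_sub_add_right_eq_sub]

theorem Finset.sum_le_card_mul_of_sum_sq_le {ι : Type*} (s : Finset ι) {a : ι → ℝ} {B : ℝ}
    (ha : ∀ i ∈ s, 0 ≤ a i) (hB : 0 ≤ B) (h : ∑ i ∈ s, a i ^ 2 ≤ B ^ 2) :
    ∑ i ∈ s, a i ≤ s.card * B := by
  have hle : ∀ i ∈ s, a i ≤ B := fun i hi =>
    (sq_le_sq₀ (ha i hi) hB).1 ((single_le_sum (fun j _ => sq_nonneg (a j)) hi).trans h)
  simpa using sum_le_card_nsmul s a B hle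

theorem real_inner_sub_nonpos_of_forall_norm_sub_le {X : Type*} [NormedAddCommGroup X]
    [InnerProductSpace ℝ X] {K : Set X} (hK : Convex ℝ K) {y v w : X} (hv : v ∈ K)
    (hmin : ∀ u ∈ K, ‖y - v‖ ≤ ‖y - u‖) (hw : w ∈ K) : ⟪y - v, w - v⟫ ≤ 0 := by
  have : Nonempty K := ⟨⟨v, hv⟩⟩
  refine (norm_eq_iInf_iff_real_inner_le_zero hK hv).1
    (le_antisymm (le_ciInf fun u => hmin u u.2) ?_) w hw
  exact ciInf_le ⟨0, by rintro _ ⟨u, rfl⟩; exact norm_nonneg (y - u)⟩ (⟨v, hv⟩ : K)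

namespace Dykstra

variable {X : Type*} [NormedAddCommGroup X] {m : ℕ} {x q : ℤ → X}

theorem sum_norm_q_le_sum_norm_sub (hq0 : ∀ k : ℤ, k ≤ 0 → q k = 0)
    (hqdef : ∀ n : ℤ, 1 ≤ n → q n = x (n - 1) + q (n - m) - x n) (n : ℕ) :
    ∑ i ∈ range m, ‖q (n - i)‖ ≤ ∑ i ∈ range n, ‖x (i + 1) - x i‖ := by
  induction n with
  | zero => simp [hq0 _ (neg_nonpos.2 (Int.natCast_nonneg _))]
  | succ n ih =>
    have hqn : ‖q (n + 1)‖ ≤ ‖q (n + 1 - m)‖ + ‖x (n + 1) - x n‖ := by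
      rw [hqdef (n + 1) (by omega), add_sub_cancel_right, add_comm, add_sub_assoc,
        norm_sub_rev (x (n + 1))]
      exact norm_add_le _ _
    have hslide := sum_range_sub_add_one (fun k => ‖q k‖) m n
    rw [sum_range_succ]
    push_cast
    linarith

variable [InnerProductSpace ℝ X]

theorem main_inequality (hq0 : ∀ k : ℤ, k ≤ 0 → q k = 0)
    (hqdef : ∀ n : ℤ, 1 ≤ n → q n = x (n - 1) + q (n - m) - x n)
    (hmono : ∀ k : ℤ, 1 ≤ k → ⟪x (k + m) - x k, q k⟫ ≤ 0) (z : X) (n : ℕ) :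
    ‖z - x n‖ ^ 2 + ∑ i ∈ range n, ‖x (i + 1) - x i‖ ^ 2 ≤
      ‖z - x 0‖ ^ 2 + 2 * ∑ i ∈ range m, ⟪z - x (n - i), q (n - i)⟫ := by
  let E : ℕ → ℝ := fun n => ‖z - x n‖ ^ 2 + ∑ i ∈ range n, ‖x (i + 1) - x i‖ ^ 2 -
    2 * ∑ i ∈ range m, ⟪z - x (n - i), q (n - i)⟫
  have hE0 : E 0 = ‖z - x 0‖ ^ 2 := by
    simp [E, hq0 _ (neg_nonpos.2 (Int.natCast_nonneg _))]
  -- `E (n + 1) - E n = 2 ⟪x (n + 1) - x (n + 1 - m), q (n + 1 - m)⟫`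
  have hstep (n : ℕ) : E (n + 1) ≤ E n := by
    have hd : x (n + 1) - x n = q (n + 1 - m) - q (n + 1) := by
      rw [hqdef (n + 1) (by omega), add_sub_cancel_right]; abel
    have hsq : ‖z - x n‖ ^ 2 = ‖z - x (n + 1)‖ ^ 2 + 2 * ⟪z - x (n + 1), x (n + 1) - x n⟫ +
        ‖x (n + 1) - x n‖ ^ 2 := by
      rw [← norm_add_sq_real, sub_add_sub_cancel]
    have hinner : ⟪z - x (n + 1), x (n + 1) - x n⟫ =
        ⟪z - x (n + 1), q (n + 1 - m)⟫ - ⟪z - x (n + 1), q (n + 1)⟫ := by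
      rw [hd, inner_sub_right]
    have hslide := sum_range_sub_add_one (fun k => ⟪z - x k, q k⟫) m n
    have hk : ⟪x (n + 1) - x (n + 1 - m), q (n + 1 - m)⟫ ≤ 0 := by
      rcases le_or_gt (n + 1 - m : ℤ) 0 with hk | hk
      · rw [hq0 _ hk, inner_zero_right]
      · simpa using hmono _ hk
    rw [show x (n + 1) - x (n + 1 - m) = (z - x (n + 1 - m)) - (z - x (n + 1)) by abel,
      inner_sub_left] at hk
    simp only [E, sum_range_succ]
    push_cast
    linarith
  linarith [antitone_nat_of_succ_le hstep (Nat.zero_le n)]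

theorem sum_inner_le_mul_sum_norm (hq0 : ∀ k : ℤ, k ≤ 0 → q k = 0) {z : X} {c : ℝ}
    (hc : ∀ k : ℤ, 1 ≤ k → ⟪z - x k, q k⟫ ≤ c * ‖q k‖) (n : ℤ) :
    ∑ i ∈ range m, ⟪z - x (n - i), q (n - i)⟫ ≤ c * ∑ i ∈ range m, ‖q (n - i)‖ := by
  rw [mul_sum]
  refine sum_le_sum fun i _ => ?_
  rcases le_or_gt (n - i) 0 with hk | hk
  · simp [hq0 _ hk]
  · exact hc _ hk

theorem sum_norm_sub_le (hq0 : ∀ k : ℤ, k ≤ 0 → q k = 0)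
    (hqdef : ∀ n : ℤ, 1 ≤ n → q n = x (n - 1) + q (n - m) - x n)
    (hmono : ∀ k : ℤ, 1 ≤ k → ⟪x (k + m) - x k, q k⟫ ≤ 0) {z : X}
    (hz : ∀ k : ℤ, 1 ≤ k → ⟪z - x k, q k⟫ ≤ 0) (n : ℕ) :
    ∑ i ∈ range n, ‖x (i + 1) - x i‖ ≤ n * ‖z - x 0‖ := by
  have hwindow := sum_inner_le_mul_sum_norm (m := m) hq0 (c := 0) (by simpa using hz) n
  have hsq : ∑ i ∈ range n, ‖x (i + 1) - x i‖ ^ 2 ≤ ‖z - x 0‖ ^ 2 := by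
    linarith [main_inequality hq0 hqdef hmono z n, sq_nonneg ‖z - x n‖,
      zero_mul (∑ i ∈ range m, ‖q (n - i)‖)]
  simpa using
    sum_le_card_mul_of_sum_sq_le (range n) (fun _ _ => norm_nonneg _) (norm_nonneg _) hsq

theorem norm_sub_sq_le (hq0 : ∀ k : ℤ, k ≤ 0 → q k = 0)
    (hqdef : ∀ n : ℤ, 1 ≤ n → q n = x (n - 1) + q (n - m) - x n)
    (hmono : ∀ k : ℤ, 1 ≤ k → ⟪x (k + m) - x k, q k⟫ ≤ 0) {c : ℝ}
    (hc : ∀ k : ℤ, 1 ≤ k → ⟪x 0 - x k, q k⟫ ≤ c * ‖q k‖) (n : ℕ) :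
    ‖x n - x 0‖ ^ 2 ≤ 2 * c * ∑ i ∈ range m, ‖q (n - i)‖ := by
  have hmain := main_inequality hq0 hqdef hmono (x 0) n
  rw [sub_self, norm_zero, norm_sub_rev] at hmain
  linarith [sum_inner_le_mul_sum_norm (m := m) hq0 hc n,
    sum_nonneg fun i (_ : i ∈ range n) => sq_nonneg ‖x (i + 1) - x i‖]

theorem inner_le_norm_mul_norm {C : ℤ → Set X} (hCconv : ∀ n, Convex ℝ (C n))
    {P : ℤ → X → X} (hP : ∀ j (y : X), P j y ∈ C j ∧ ∀ w ∈ C j, ‖y - P j y‖ ≤ ‖y - w‖)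
    (hxdef : ∀ n : ℤ, 1 ≤ n → x n = P n (x (n - 1) + q (n - m)))
    (hqdef : ∀ n : ℤ, 1 ≤ n → q n = x (n - 1) + q (n - m) - x n)
    (k : ℤ) (hk : 1 ≤ k) (z : X) {w : X} (hw : w ∈ C k) :
    ⟪z - x k, q k⟫ ≤ ‖z - w‖ * ‖q k‖ := by
  have hnormal : ⟪q k, w - x k⟫ ≤ 0 := by
    rw [hqdef k hk, hxdef k hk]
    exact real_inner_sub_nonpos_of_forall_norm_sub_le (hCconv k) (hP k _).1 (hP k _).2 hw
  calc ⟪z - x k, q k⟫ = ⟪z - w, q k⟫ + ⟪q k, w - x k⟫ := by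
        rw [real_inner_comm (w - x k), ← inner_add_left, sub_add_sub_cancel]
    _ ≤ ‖z - w‖ * ‖q k‖ := by linarith [real_inner_le_norm (z - w) (q k)]

theorem inner_sub_shift_nonpos {C : ℤ → Set X} (hCconv : ∀ n, Convex ℝ (C n))
    (hCper : ∀ n : ℤ, C (n + m) = C n) {P : ℤ → X → X}
    (hP : ∀ j (y : X), P j y ∈ C j ∧ ∀ w ∈ C j, ‖y - P j y‖ ≤ ‖y - w‖)
    (hxdef : ∀ n : ℤ, 1 ≤ n → x n = P n (x (n - 1) + q (n - m)))
    (hqdef : ∀ n : ℤ, 1 ≤ n → q n = x (n - 1) + q (n - m) - x n) (k : ℤ) (hk : 1 ≤ k) :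
    ⟪x (k + m) - x k, q k⟫ ≤ 0 := by
  have hx : x (k + m) ∈ C k := by
    rw [← hCper, hxdef _ (by omega)]
    exact (hP _ _).1
  simpa using inner_le_norm_mul_norm hCconv hP hxdef hqdef k hk (x (k + m)) hx

end Dykstra

theorem stmt_16_general
    (X : Type*) [NormedAddCommGroup X] [InnerProductSpace ℝ X]
    (m : ℕ) (hm : 2 ≤ m)
    (C : ℤ → Set X) (hCconv : ∀ n, Convex ℝ (C n))
    (hCper : ∀ n : ℤ, C (n + m) = C n)
    (P : ℤ → X → X)
    (hP : ∀ j (y : X), P j y ∈ C j ∧ ∀ w ∈ C j, ‖y - P j y‖ ≤ ‖y - w‖)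
    (x q : ℤ → X) (hq0 : ∀ k : ℤ, k ≤ 0 → q k = 0)
    (hxdef : ∀ n : ℤ, 1 ≤ n → x n = P n (x (n - 1) + q (n - m)))
    (hqdef : ∀ n : ℤ, 1 ≤ n → q n = x (n - 1) + q (n - m) - x n)
    (p : X) (hp : ∀ j ∈ Finset.Icc (1:ℤ) m, p ∈ C j)
    (b : ℕ) (hb : ‖x 0 - p‖ ≤ (b : ℝ))
    : ∀ ε > (0:ℝ), ∀ n : ℕ, 1 ≤ n →
        (∀ j ∈ Finset.Icc (1:ℤ) m, ‖x 0 - P j (x 0)‖ ≤ ε ^ 2 / (4 * b * n)) →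
        ‖x (n : ℤ) - x 0‖ ≤ ε := by
  intro ε hε n _ hεP
  set δ := ε ^ 2 / (4 * b * n)
  have hper : Function.Periodic C m := hCper
  have hpC : ∀ k, p ∈ C k := hper.forall_of_forall_Icc (Q := (p ∈ ·)) (by omega) hp
  have hproj (k : ℤ) : ‖x 0 - P k (x 0)‖ ≤ δ := by
    obtain ⟨w, hw, hwδ⟩ := hper.forall_of_forall_Icc (Q := fun S => ∃ w ∈ S, ‖x 0 - w‖ ≤ δ)
      (by omega) (fun j hj => ⟨_, (hP j _).1, hεP j hj⟩) k
    exact ((hP k _).2 w hw).trans hwδ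
  have hle := Dykstra.inner_le_norm_mul_norm hCconv hP hxdef hqdef
  have hmono := Dykstra.inner_sub_shift_nonpos hCconv hCper hP hxdef hqdef
  have hsteps : ∑ i ∈ range n, ‖x (i + 1) - x i‖ ≤ n * b :=
    (Dykstra.sum_norm_sub_le hq0 hqdef hmono
      (fun k hk => by simpa using hle k hk p (hpC k)) n).trans (by gcongr; rwa [norm_sub_rev])
  have hclose := Dykstra.norm_sub_sq_le hq0 hqdef hmono
    (fun k hk => (hle k hk (x 0) (hP k _).1).trans
      (mul_le_mul_of_nonneg_right (hproj k) (norm_nonneg _))) n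
  have hwindow := (Dykstra.sum_norm_q_le_sum_norm_sub hq0 hqdef n).trans hsteps
  have hδ : 2 * δ * (n * b) ≤ ε ^ 2 := by
    rcases b.eq_zero_or_pos with rfl | hb0
    · simp only [Nat.cast_zero, mul_zero]; positivity
    · have : (n : ℝ) ≠ 0 := by positivity
      simp only [δ]; field_simp; linarith [sq_nonneg ε]
  rw [← sq_le_sq₀ (norm_nonneg _) hε.le]
  nlinarith [mul_le_mul_of_nonneg_left hwindow (by positivity : 0 ≤ 2 * δ)]

theorem stmt_16
    (X : Type*) [NormedAddCommGroup X] [InnerProductSpace ℝ X]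
    (m : ℕ) (hm : 2 ≤ m)
    (C : ℤ → Set X) (hCcl : ∀ n, IsClosed (C n)) (hCconv : ∀ n, Convex ℝ (C n))
    (hCne : (⋂ j ∈ Finset.Icc (1:ℤ) m, C j).Nonempty)
    (hCper : ∀ n : ℤ, C (n + m) = C n)
    (P : ℤ → X → X)
    (hP : ∀ j (y : X), P j y ∈ C j ∧ ∀ w ∈ C j, ‖y - P j y‖ ≤ ‖y - w‖)
    (x q : ℤ → X) (hq0 : ∀ k : ℤ, k ≤ 0 → q k = 0)
    (hxdef : ∀ n : ℤ, 1 ≤ n → x n = P n (x (n - 1) + q (n - m)))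
    (hqdef : ∀ n : ℤ, 1 ≤ n → q n = x (n - 1) + q (n - m) - x n)
    (p : X) (hp : ∀ j ∈ Finset.Icc (1:ℤ) m, p ∈ C j)
    (b : ℕ) (hb1 : 1 ≤ b) (hb : ‖x 0 - p‖ ≤ (b : ℝ))
    : ∀ ε > (0:ℝ), ∀ n : ℕ, 1 ≤ n →
        (∀ j ∈ Finset.Icc (1:ℤ) m, ‖x 0 - P j (x 0)‖ ≤ ε ^ 2 / (4 * b * n)) →
        ‖x (n : ℤ) - x 0‖ ≤ ε :=
  stmt_16_general X m hm C hCconv hCper P hP x q hq0 hxdef hqdef p hp b hb
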